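/- For every γ ≥ 0, the optimal value of the dual program satisfies D*(γ) = μ·γ + λ·(c^f(r) − V(γ, r)). -/

import Mathlib

open scoped Classical
open Finset

/-- A finite tree-structured Markov chain: a finite state space partitioned into
levels `0, …, L-1`, a root `r` at level `0`, a parent map `pa` (with `pa r = r` by
convention), and transition probabilities `p i ∈ (0,1]` of being reached from the
parent, with `p r = 1`. -/
structure TreeMC (S : Type*) [Fintype S] [DecidableEq S] where
  /-- the number of levels -/
  L : ℕ
  /-- the root -/
  r : S
  /-- the parent map (with `pa r = r` by convention) -/
  pa : S → S
  /-- the level of each state -/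
  level : S → ℕ
  /-- the probability of being reached from the parent -/
  p : S → ℝ
  level_lt : ∀ i, level i < L
  level_r : level r = 0
  root_unique : ∀ i, level i = 0 → i = r
  pa_r : pa r = r
  level_pa : ∀ i, i ≠ r → level (pa i) + 1 = level i
  p_pos : ∀ i, 0 < p i
  p_le_one : ∀ i, p i ≤ 1
  p_r : p r = 1

namespace TreeMC

variable {S : Type*} [Fintype S] [DecidableEq S] (M : TreeMC S)

/-- The ancestors of `i`: states on the path from the root to `i` (both included). -/
noncomputable def anc (i : S) : Finset S :=
  Finset.univ.filter fun a => ∃ n : ℕ, M.pa^[n] i = a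

/-- The subtree of `i`: all states having `i` as an ancestor. -/
noncomputable def subt (i : S) : Finset S :=
  Finset.univ.filter fun k => i ∈ M.anc k

/-- The subtree of a set of states. -/
noncomputable def subF (X : Finset S) : Finset S :=
  Finset.univ.filter fun k => ∃ i ∈ X, k ∈ M.subt i

/-- `π i`: the probability that a job passes through state `i`. -/
noncomputable def pi (i : S) : ℝ :=
  ∏ a ∈ M.anc i, M.p a

/-- The children of `i`. -/
noncomputable def child (i : S) : Finset S :=
  Finset.univ.filter fun k => k ≠ M.r ∧ M.pa k = i

/-- `T` is the top set of `X`: a subset of `X` whose subtree covers `X` and in which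
no state lies in the subtree of a different state. -/
def IsTopSet (X T : Finset S) : Prop :=
  T ⊆ X ∧ X ⊆ M.subF T ∧ ∀ i ∈ T, ∀ k ∈ T, i ≠ k → k ∉ M.subt i

/-- Expected future cost conditional on being in state `a`. -/
noncomputable def cf (c : S → ℝ) (a : S) : ℝ :=
  ∑ i ∈ M.subt a, c i * M.pi i / M.pi a

/-- `V` is the ski-rental value function:
`V γ i = min (γ, c i + Σ_{k ∈ child i} p k · V γ k)`. -/
def IsSkiValue (c : S → ℝ) (V : ℝ → S → ℝ) : Prop :=
  ∀ γ : ℝ, ∀ i : S, V γ i = min γ (c i + ∑ k ∈ M.child i, M.p k * V γ k)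

/-- Expected future cost-to-go `V^f`. -/
noncomputable def Vf (V : ℝ → S → ℝ) (γ : ℝ) (i : S) : ℝ :=
  ∑ k ∈ M.child i, M.p k * V γ k

/-- The candidate optimal state duals `β*(γ)`. -/
noncomputable def betaStar (c : S → ℝ) (V : ℝ → S → ℝ) (γ : ℝ) (i : S) : ℝ :=
  max 0 (c i + M.Vf V γ i - γ)

/-- Feasibility for the dual program `D*(γ)`. -/
def DualFeasible (c : S → ℝ) (γ : ℝ) (β : S → ℝ) : Prop :=
  (∀ i, 0 ≤ β i) ∧ ∀ a, M.cf c a ≤ γ + ∑ i ∈ M.subt a, β i * M.pi i / M.pi a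

/-- Feasibility for the fluid LP (OriginalFluid). -/
def OrigFeasible (lam mu : ℝ) (q ν : S → ℝ) : Prop :=
  (∀ i, 0 ≤ q i) ∧ (∀ i, 0 ≤ ν i) ∧ q M.r = lam ∧
    (∀ i, i ≠ M.r → q i = (q (M.pa i) - ν (M.pa i)) * M.p i) ∧
    (∀ i, ν i ≤ q i) ∧ ∑ i : S, ν i ≤ mu

/-- Feasibility for the fluid LP (SimplerFluid). -/
def SimpFeasible (lam mu : ℝ) (ν : S → ℝ) : Prop :=
  (∀ i, 0 ≤ ν i) ∧ (∀ i, ∑ a ∈ M.anc i, ν a * M.pi i / M.pi a ≤ lam * M.pi i) ∧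
    ∑ i : S, ν i ≤ mu

end TreeMC

/-!
The dual sum `Σ_{i ∈ sub(a)} β_i π(i)/π(a)` is the future cost `c^f(a)` computed with cost
vector `β`, so every quantity in the dual program is a normalised subtree sum `M.cf g a`, and
these satisfy the same recursion over children as `V^f`. By induction from the leaves, the
choice `β* = (c + V^f − γ)⁺` gives `c^f_{β*}(a) = c^f(a) − V(γ, a) ≥ c^f(a) − γ`, so it is
feasible, while any feasible `β` satisfies `c^f_β(a) ≥ c^f(a) − V(γ, a)`: the constraint at `a`
covers the branch `V = γ`, and the induction hypothesis at the children covers the branch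
`V = c + V^f`. Evaluating at the root, where `c^f_β(r) = Σ π(i) β_i`, gives the optimal value.
-/

namespace TreeMC

variable {S : Type*} [Fintype S] [DecidableEq S] (M : TreeMC S)

@[simp]
lemma mem_anc_iff {a i : S} : a ∈ M.anc i ↔ ∃ n, M.pa^[n] i = a := by
  simp [anc]

@[simp]
lemma mem_subt_iff {i a : S} : i ∈ M.subt a ↔ a ∈ M.anc i := by
  simp [subt]

@[simp]
lemma mem_child_iff {k a : S} : k ∈ M.child a ↔ k ≠ M.r ∧ M.pa k = a := by
  simp [child]

lemma level_iterate_pa {n : ℕ} {i : S} (h : n ≤ M.level i) :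
    M.level (M.pa^[n] i) = M.level i - n := by
  induction n with
  | zero => rfl
  | succ n ih =>
    have hn : M.level (M.pa^[n] i) = M.level i - n := ih (by omega)
    have hne : M.pa^[n] i ≠ M.r := fun he => by rw [he, M.level_r] at hn; omega
    rw [Function.iterate_succ_apply', ← M.level_pa _ hne] at *
    omega

lemma iterate_pa_eq_root {n : ℕ} {i : S} (h : M.level i ≤ n) : M.pa^[n] i = M.r := by
  have hroot : M.pa^[M.level i] i = M.r :=
    M.root_unique _ (by rw [M.level_iterate_pa le_rfl, Nat.sub_self])
  obtain ⟨m, rfl⟩ := Nat.exists_eq_add_of_le h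
  rw [add_comm, Function.iterate_add_apply, hroot, Function.iterate_fixed M.pa_r]

lemma mem_anc_iff_level {a i : S} :
    a ∈ M.anc i ↔ M.level a ≤ M.level i ∧ M.pa^[M.level i - M.level a] i = a := by
  refine ⟨fun h => ?_, fun h => M.mem_anc_iff.2 ⟨_, h.2⟩⟩
  obtain ⟨n, rfl⟩ := M.mem_anc_iff.1 h
  by_cases hn : n ≤ M.level i
  · rw [M.level_iterate_pa hn, Nat.sub_sub_self hn]
    exact ⟨Nat.sub_le _ _, rfl⟩
  · rw [M.iterate_pa_eq_root (by omega), M.level_r, Nat.sub_zero]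
    exact ⟨Nat.zero_le _, M.iterate_pa_eq_root le_rfl⟩

lemma eq_of_mem_anc_of_level_eq {a b i : S} (ha : a ∈ M.anc i) (hb : b ∈ M.anc i)
    (h : M.level a = M.level b) : a = b := by
  rw [M.mem_anc_iff_level] at ha hb
  rw [← ha.2, ← hb.2, h]

lemma level_le_of_mem_anc {a i : S} (h : a ∈ M.anc i) : M.level a ≤ M.level i :=
  (M.mem_anc_iff_level.1 h).1

lemma self_mem_anc (i : S) : i ∈ M.anc i :=
  M.mem_anc_iff.2 ⟨0, rfl⟩

lemma root_mem_anc (i : S) : M.r ∈ M.anc i :=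
  M.mem_anc_iff.2 ⟨M.level i, M.iterate_pa_eq_root le_rfl⟩

lemma pa_mem_anc {k i : S} (h : k ∈ M.anc i) : M.pa k ∈ M.anc i := by
  obtain ⟨n, rfl⟩ := M.mem_anc_iff.1 h
  exact M.mem_anc_iff.2 ⟨n + 1, Function.iterate_succ_apply' _ _ _⟩

lemma anc_root : M.anc M.r = {M.r} := by
  ext a
  refine ⟨fun h => ?_, fun h => Finset.mem_singleton.1 h ▸ M.root_mem_anc M.r⟩
  have := M.level_le_of_mem_anc h
  exact Finset.mem_singleton.2 (M.root_unique a (by rw [M.level_r] at this; omega))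

lemma anc_eq_insert_anc_pa {k : S} (hk : k ≠ M.r) :
    M.anc k = insert k (M.anc (M.pa k)) := by
  ext a
  simp only [mem_anc_iff, Finset.mem_insert]
  constructor
  · rintro ⟨_ | n, rfl⟩
    · exact Or.inl rfl
    · exact Or.inr ⟨n, rfl⟩
  · rintro (rfl | ⟨n, rfl⟩)
    · exact ⟨0, rfl⟩
    · exact ⟨n + 1, rfl⟩

lemma level_of_mem_child {k a : S} (h : k ∈ M.child a) : M.level k = M.level a + 1 := by
  obtain ⟨hk, rfl⟩ := M.mem_child_iff.1 h
  exact (M.level_pa k hk).symm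

lemma pi_pos (i : S) : 0 < M.pi i :=
  Finset.prod_pos fun a _ => M.p_pos a

lemma pi_root : M.pi M.r = 1 := by
  rw [pi, M.anc_root, Finset.prod_singleton, M.p_r]

lemma pi_of_mem_child {k a : S} (h : k ∈ M.child a) : M.pi k = M.p k * M.pi a := by
  obtain ⟨hk, rfl⟩ := M.mem_child_iff.1 h
  have hnot : k ∉ M.anc (M.pa k) := fun hmem => by
    have := M.level_le_of_mem_anc hmem
    have := M.level_pa k hk
    omega
  rw [pi, M.anc_eq_insert_anc_pa hk, Finset.prod_insert hnot, pi]

lemma subt_root : M.subt M.r = Finset.univ :=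
  Finset.eq_univ_of_forall fun i => M.mem_subt_iff.2 (M.root_mem_anc i)

lemma subt_eq_insert_biUnion_child (a : S) :
    M.subt a = insert a ((M.child a).biUnion M.subt) := by
  ext i
  simp only [Finset.mem_insert, Finset.mem_biUnion, mem_subt_iff, mem_child_iff]
  constructor
  · intro h
    obtain ⟨hle, hiter⟩ := M.mem_anc_iff_level.1 h
    rcases hle.eq_or_lt with heq | hlt
    · exact Or.inl (M.eq_of_mem_anc_of_level_eq (M.self_mem_anc i) h heq.symm)
    · -- the ancestor of `i` one level below `a`
      have hlevel : M.level (M.pa^[M.level i - M.level a - 1] i) = M.level a + 1 := by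
        rw [M.level_iterate_pa (by omega)]; omega
      have hpa : M.pa (M.pa^[M.level i - M.level a - 1] i) = a := by
        rw [← Function.iterate_succ_apply' M.pa, Nat.succ_eq_add_one,
          Nat.sub_add_cancel (by omega : 1 ≤ M.level i - M.level a), hiter]
      refine Or.inr ⟨_, ⟨fun hk => ?_, hpa⟩, M.mem_anc_iff.2 ⟨_, rfl⟩⟩
      rw [hk, M.level_r] at hlevel; omega
  · rintro (rfl | ⟨k, ⟨-, rfl⟩, hk⟩)
    · exact M.self_mem_anc i
    · exact M.pa_mem_anc hk

lemma pairwiseDisjoint_subt_child (a : S) :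
    (M.child a : Set S).PairwiseDisjoint M.subt := by
  intro k hk k' hk' hne
  refine Finset.disjoint_left.2 fun i hik hik' => hne ?_
  rw [M.mem_subt_iff] at hik hik'
  exact M.eq_of_mem_anc_of_level_eq hik hik'
    (by rw [M.level_of_mem_child hk, M.level_of_mem_child hk'])

lemma not_mem_biUnion_subt_child (a : S) : a ∉ (M.child a).biUnion M.subt := by
  simp only [Finset.mem_biUnion, not_exists, not_and]
  intro k hk hak
  have := M.level_le_of_mem_anc (M.mem_subt_iff.1 hak)
  rw [M.level_of_mem_child hk] at this
  omega

lemma sum_subt_eq_add_sum_child (f : S → ℝ) (a : S) :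
    ∑ i ∈ M.subt a, f i = f a + ∑ k ∈ M.child a, ∑ i ∈ M.subt k, f i := by
  rw [M.subt_eq_insert_biUnion_child, Finset.sum_insert (M.not_mem_biUnion_subt_child a),
    Finset.sum_biUnion (M.pairwiseDisjoint_subt_child a)]

lemma cf_eq_add_sum_child (g : S → ℝ) (a : S) :
    M.cf g a = g a + ∑ k ∈ M.child a, M.p k * M.cf g k := by
  rw [cf, M.sum_subt_eq_add_sum_child, mul_div_cancel_right₀ _ (M.pi_pos a).ne']
  congr 1
  refine Finset.sum_congr rfl fun k hk => ?_
  rw [cf, Finset.mul_sum]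
  refine Finset.sum_congr rfl fun i _ => ?_
  rw [M.pi_of_mem_child hk]
  field_simp [(M.pi_pos a).ne', (M.p_pos k).ne']

lemma cf_root (g : S → ℝ) : M.cf g M.r = ∑ i, M.pi i * g i := by
  simp only [cf, M.subt_root, M.pi_root, div_one, mul_comm]

lemma child_induction {P : S → Prop} (h : ∀ a, (∀ k ∈ M.child a, P k) → P a) (a : S) :
    P a :=
  h a fun k hk =>
    have := M.level_of_mem_child hk
    have := M.level_lt k
    child_induction h k
termination_by M.L - M.level a

section Dual

variable {M} {c : S → ℝ} {V : ℝ → S → ℝ}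

lemma dualFeasible_iff {γ : ℝ} {β : S → ℝ} :
    M.DualFeasible c γ β ↔ (∀ i, 0 ≤ β i) ∧ ∀ a, M.cf c a ≤ γ + M.cf β a :=
  Iff.rfl

lemma value_le (hV : M.IsSkiValue c V) (γ : ℝ) (a : S) : V γ a ≤ γ :=
  (hV γ a).trans_le (min_le_left _ _)

lemma betaStar_eq (hV : M.IsSkiValue c V) (γ : ℝ) (a : S) :
    M.betaStar c V γ a = c a + M.Vf V γ a - V γ a := by
  rw [betaStar, hV γ a, Vf]
  rcases le_total γ (c a + ∑ k ∈ M.child a, M.p k * V γ k) with h | h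
  · rw [max_eq_right (by linarith), min_eq_left h]
  · rw [max_eq_left (by linarith), min_eq_right h, sub_self]

lemma cf_betaStar (hV : M.IsSkiValue c V) (γ : ℝ) (a : S) :
    M.cf (M.betaStar c V γ) a = M.cf c a - V γ a := by
  induction a using M.child_induction with
  | h a ih =>
    rw [M.cf_eq_add_sum_child, Finset.sum_congr rfl fun k hk => by rw [ih k hk],
      M.cf_eq_add_sum_child c, betaStar_eq hV, Vf]
    simp only [mul_sub, Finset.sum_sub_distrib]
    ring

lemma dualFeasible_betaStar (hV : M.IsSkiValue c V) (γ : ℝ) :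
    M.DualFeasible c γ (M.betaStar c V γ) := by
  refine dualFeasible_iff.2 ⟨fun i => le_max_left _ _, fun a => ?_⟩
  linarith [cf_betaStar hV γ a, value_le hV γ a]

lemma cf_sub_value_le_cf_of_dualFeasible (hV : M.IsSkiValue c V) {γ : ℝ} {β : S → ℝ}
    (hβ : M.DualFeasible c γ β) (a : S) : M.cf c a - V γ a ≤ M.cf β a := by
  induction a using M.child_induction with
  | h a ih =>
    rw [hV γ a]
    rcases le_total γ (c a + ∑ k ∈ M.child a, M.p k * V γ k) with h | h
    · rw [min_eq_left h]
      linarith [(dualFeasible_iff.1 hβ).2 a]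
    · have hchild : ∑ k ∈ M.child a, M.p k * (M.cf c k - V γ k)
          ≤ ∑ k ∈ M.child a, M.p k * M.cf β k :=
        Finset.sum_le_sum fun k hk => mul_le_mul_of_nonneg_left (ih k hk) (M.p_pos k).le
      simp only [mul_sub, Finset.sum_sub_distrib] at hchild
      rw [min_eq_right h, M.cf_eq_add_sum_child c, M.cf_eq_add_sum_child β]
      linarith [hβ.1 a]

end Dual

end TreeMC

theorem dual_value_eq_general {S : Type*} [Fintype S] [DecidableEq S]
    (M : TreeMC S) (c : S → ℝ)
    (V : ℝ → S → ℝ) (hV : M.IsSkiValue c V)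
    (lam mu : ℝ) (hlam0 : 0 < lam)
    (γ : ℝ) :
    IsLeast
      {v : ℝ | ∃ β : S → ℝ, M.DualFeasible c γ β ∧
        v = lam * ∑ i : S, M.pi i * β i + mu * γ}
      (mu * γ + lam * (M.cf c M.r - V γ M.r)) := by
  refine ⟨⟨M.betaStar c V γ, M.dualFeasible_betaStar hV γ, ?_⟩, ?_⟩
  · rw [← M.cf_root, M.cf_betaStar hV]
    ring
  · rintro v ⟨β, hβ, rfl⟩
    have hlower := M.cf_sub_value_le_cf_of_dualFeasible hV hβ M.r
    rw [M.cf_root β] at hlower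
    linarith [mul_le_mul_of_nonneg_left hlower hlam0.le]

/-- For every `γ ≥ 0`, the optimal value of the dual program satisfies
`D*(γ) = μ·γ + λ·(c^f(r) − V(γ, r))`. -/
theorem dual_value_eq {S : Type*} [Fintype S] [DecidableEq S]
    (M : TreeMC S) (c : S → ℝ) (hc : ∀ i, 0 < c i)
    (V : ℝ → S → ℝ) (hV : M.IsSkiValue c V)
    (lam mu : ℝ) (hlam0 : 0 < lam) (hlam1 : lam < 1) (hmu0 : 0 < mu) (hmu1 : mu ≤ 1)
    (γ : ℝ) (hγ : 0 ≤ γ) :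
    IsLeast
      {v : ℝ | ∃ β : S → ℝ, M.DualFeasible c γ β ∧
        v = lam * ∑ i : S, M.pi i * β i + mu * γ}
      (mu * γ + lam * (M.cf c M.r - V γ M.r)) :=
  dual_value_eq_general M c V hV lam mu hlam0 γ
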